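/- Let A be a noetherian Banach–Tate ring, let M and N be ONable Banach A-modules with ON bases (e_i)_{i∈I} and (f_j)_{j∈J}, and let φ:M→N be a continuous A-linear map with matrix (a_{i,j}). Then φ is compact if and only if lim_{j→∞} sup_{i∈I}|a_{i,j}|=0, i.e. if and only if for every ε>0 there are only finitely many j∈J with sup_{i∈I}|a_{i,j}|>ε. -/

import Mathlib

open scoped Classical

universe u v w

/-- A (non-archimedean, submultiplicative) ring norm with values in `ℝ`. -/
structure IsRingNorm {A : Type*} [Ring A] (v : A → ℝ) : Prop where
  nonneg : ∀ a, 0 ≤ v a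
  eq_zero_iff : ∀ a, v a = 0 ↔ a = 0
  map_one : v 1 = 1
  map_neg : ∀ a, v (-a) = v a
  add_le : ∀ a b, v (a + b) ≤ max (v a) (v b)
  mul_le : ∀ a b, v (a * b) ≤ v a * v b

theorem IsRingNorm.map_zero {A : Type*} [Ring A] {v : A → ℝ} (hv : IsRingNorm v) :
    v 0 = 0 := (hv.eq_zero_iff 0).mpr rfl

/-- A norm on an `A`-module, compatible with a ring norm `v` on `A`. -/
structure IsModuleNorm {A : Type*} [Ring A] (v : A → ℝ) {M : Type*} [AddCommGroup M]
    [Module A M] (nm : M → ℝ) : Prop where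
  nonneg : ∀ m, 0 ≤ nm m
  eq_zero_iff : ∀ m, nm m = 0 ↔ m = 0
  map_neg : ∀ m, nm (-m) = nm m
  add_le : ∀ m n, nm (m + n) ≤ max (nm m) (nm n)
  smul_le : ∀ (a : A) (m : M), nm (a • m) ≤ v a * nm m

/-- A sequence is Cauchy with respect to a norm. -/
def NormCauchy {M : Type*} [AddCommGroup M] (nm : M → ℝ) (s : ℕ → M) : Prop :=
  ∀ ε : ℝ, 0 < ε → ∃ N : ℕ, ∀ i j : ℕ, N ≤ i → N ≤ j → nm (s i - s j) < ε

/-- A sequence converges to `x` with respect to a norm. -/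
def NormLim {M : Type*} [AddCommGroup M] (nm : M → ℝ) (s : ℕ → M) (x : M) : Prop :=
  ∀ ε : ℝ, 0 < ε → ∃ N : ℕ, ∀ i : ℕ, N ≤ i → nm (s i - x) < ε

/-- Completeness: every Cauchy sequence converges. -/
def NormComplete {M : Type*} [AddCommGroup M] (nm : M → ℝ) : Prop :=
  ∀ s : ℕ → M, NormCauchy nm s → ∃ x : M, NormLim nm s x

/-- Continuity of a map between modules equipped with norms. -/
def NormContinuous {M N : Type*} [AddCommGroup M] [AddCommGroup N]
    (nmM : M → ℝ) (nmN : N → ℝ) (f : M → N) : Prop :=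
  ∀ m : M, ∀ ε : ℝ, 0 < ε → ∃ δ : ℝ, 0 < δ ∧
    ∀ m' : M, nmM (m' - m) < δ → nmN (f m' - f m) < ε

/-- A Banach–Tate ring: a complete normed ring containing a multiplicative
topologically nilpotent unit. -/
structure IsBanachTate {A : Type*} [Ring A] (v : A → ℝ) : Prop where
  isRingNorm : IsRingNorm v
  complete : NormComplete v
  exists_unit : ∃ ϖ : A, IsUnit ϖ ∧ v ϖ < 1 ∧ ∀ b, v (ϖ * b) = v ϖ * v b
/-- `cA v hv I` is the Banach `A`-module `c_A(I)` of functions `I → A` tending to zero: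
for every `ε > 0` only finitely many `i` satisfy `v (f i) > ε`. -/
def cA {A : Type u} [Ring A] (v : A → ℝ) (hv : IsRingNorm v) (I : Type v) :
    Submodule A (I → A) where
  carrier := {f | ∀ ε : ℝ, 0 < ε → {i : I | ε < v (f i)}.Finite}
  add_mem' := by
    intro f g hf hg ε hε
    refine ((hf ε hε).union (hg ε hε)).subset ?_
    intro i hi
    simp only [Set.mem_setOf_eq, Pi.add_apply] at hi
    simp only [Set.mem_union, Set.mem_setOf_eq]
    by_contra hc
    push_neg at hc
    have h := le_trans (hv.add_le (f i) (g i)) (max_le hc.1 hc.2)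
    exact absurd hi (not_lt.mpr h)
  zero_mem' := by
    intro ε hε
    have : {i : I | ε < v ((0 : I → A) i)} = ∅ := by
      ext i
      simp only [Set.mem_setOf_eq, Pi.zero_apply, Set.mem_empty_iff_false, iff_false, not_lt,
        hv.map_zero]
      exact le_of_lt hε
    rw [this]; exact Set.finite_empty
  smul_mem' := by
    intro a f hf ε hε
    rcases eq_or_ne a 0 with rfl | ha
    · refine Set.finite_empty.subset ?_
      intro i hi
      simp only [Set.mem_setOf_eq, Pi.smul_apply, zero_smul, hv.map_zero] at hi
      exact absurd hi (not_lt.mpr (le_of_lt hε))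
    · have hva : 0 < v a := by
        rcases lt_or_eq_of_le (hv.nonneg a) with h | h
        · exact h
        · exact absurd ((hv.eq_zero_iff a).mp h.symm) ha
      refine (hf (ε / v a) (div_pos hε hva)).subset ?_
      intro i hi
      simp only [Set.mem_setOf_eq, Pi.smul_apply, smul_eq_mul] at hi
      simp only [Set.mem_setOf_eq]
      rw [div_lt_iff₀ hva]
      calc ε < v (a * f i) := hi
        _ ≤ v a * v (f i) := hv.mul_le a (f i)
        _ = v (f i) * v a := mul_comm _ _

/-- The norm on `c_A(I)`: the supremum (= maximum) of the norms of the values. -/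
noncomputable def cNorm {A : Type u} [Ring A] (v : A → ℝ) {hv : IsRingNorm v} {I : Type v}
    (f : cA v hv I) : ℝ :=
  ⨆ i : I, v ((f : I → A) i)

/-- The canonical `i`-th basis vector `e_i` of `c_A(I)`. -/
noncomputable def stdDelta {A : Type u} [Ring A] (v : A → ℝ) (hv : IsRingNorm v) {I : Type v} (i : I) :
    cA v hv I :=
  ⟨fun j => if j = i then 1 else 0, by
    intro ε hε
    refine (Set.finite_singleton i).subset ?_
    intro j hj
    simp only [Set.mem_setOf_eq] at hj
    simp only [Set.mem_singleton_iff]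
    by_contra hji
    rw [if_neg hji, hv.map_zero] at hj
    exact absurd hj (not_lt.mpr (le_of_lt hε))⟩
/-- A linear map has finite rank if its image is contained in a finitely generated
submodule of the target. -/
def FiniteRank {A : Type u} [Ring A] {M : Type v} {N : Type w} [AddCommGroup M] [Module A M]
    [AddCommGroup N] [Module A N] (f : M →ₗ[A] N) : Prop :=
  ∃ P : Submodule A N, P.FG ∧ LinearMap.range f ≤ P

/-- A continuous linear map is compact if it is a limit, in the operator norm, of
continuous finite rank maps. -/
def IsCompactOp {A : Type u} [Ring A] {M : Type v} {N : Type w} [AddCommGroup M] [Module A M]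
    [AddCommGroup N] [Module A N] (nmM : M → ℝ) (nmN : N → ℝ) (f : M →ₗ[A] N) : Prop :=
  NormContinuous nmM nmN f ∧
  ∀ ε : ℝ, 0 < ε → ∃ g : M →ₗ[A] N, NormContinuous nmM nmN g ∧ FiniteRank g ∧
    ∀ m : M, nmN (f m - g m) ≤ ε * nmM m

/-- The matrix coefficients `a_{i,j}` of a linear map `f : M → N`, with respect to
ON bases of `M` and `N` given by isomorphisms with `c_A(I)` and `c_A(J)`:
`f(e_i) = Σ_j a_{i,j} f_j`. -/
noncomputable def matrixCoef {A : Type u} [Ring A] (v : A → ℝ) (hv : IsRingNorm v)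
    {I : Type v} {J : Type v} {M N : Type v} [AddCommGroup M] [Module A M]
    [AddCommGroup N] [Module A N]
    (TM : M ≃ₗ[A] cA v hv I) (TN : N ≃ₗ[A] cA v hv J)
    (f : M →ₗ[A] N) (i : I) (j : J) : A :=
  ((TN (f (TM.symm (stdDelta v hv i))) : cA v hv J) : J → A) j

/-- The projection of `c_A(I)` onto the coordinates in a finite set `S`. -/
noncomputable def projCA {A : Type u} [Ring A] (v : A → ℝ) (hv : IsRingNorm v) {I : Type v}
    (S : Finset I) : cA v hv I →ₗ[A] cA v hv I where
  toFun f := ⟨fun i => if i ∈ S then (f : I → A) i else 0, by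
    intro ε hε
    refine (f.2 ε hε).subset ?_
    intro i hi
    simp only [Set.mem_setOf_eq] at hi ⊢
    by_cases h : i ∈ S
    · rwa [if_pos h] at hi
    · rw [if_neg h, hv.map_zero] at hi
      exact absurd hi (not_lt.mpr (le_of_lt hε))⟩
  map_add' f g := by
    apply Subtype.ext
    funext i
    by_cases h : i ∈ S <;> simp [h]
  map_smul' a f := by
    apply Subtype.ext
    funext i
    by_cases h : i ∈ S <;> simp [h]

/-- The projection `π_S : M → M` of an ONable Banach module onto the span of the
basis vectors indexed by a finite set `S`. -/
noncomputable def projON {A : Type u} [Ring A] (v : A → ℝ) (hv : IsRingNorm v)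
    {I : Type v} {M : Type v} [AddCommGroup M] [Module A M]
    (T : M ≃ₗ[A] cA v hv I) (S : Finset I) : M →ₗ[A] M :=
  T.symm.toLinearMap ∘ₗ projCA v hv S ∘ₗ T.toLinearMap

/-!
A finite rank continuous map `g` has its image in the span of finitely many vectors `q_k`. A Baire
category argument on `M`, followed by the successive approximation scheme of the open mapping
theorem (convergent because `A` is complete and the pseudo-uniformizer scales norms exactly),
writes `g x = ∑ c_k • q_k` with `v (c_k) ≤ C * ‖x‖`. As each `q_k` lies in `c_A(J)`, the columns
of `g` tend to zero uniformly, and those of a compact `φ` are `ε`-close to those of such a `g`.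
Conversely, if the columns tend to zero, truncating `φ` to the finitely many columns of norm `> ε`
gives a finite rank map `ε`-close to `φ`, since a continuous map out of `c_A(I)` is bounded by the
supremum of its values on the basis.
-/

theorem exists_forall_ge_pow_mul_lt {r : ℝ} (hr0 : 0 ≤ r) (hr1 : r < 1) (C : ℝ) {ε : ℝ}
    (hε : 0 < ε) : ∃ N : ℕ, ∀ T ≥ N, r ^ T * C < ε :=
  Filter.eventually_atTop.mp
    (((tendsto_pow_atTop_nhds_zero_of_lt_one hr0 hr1).mul_const C).eventually
      (gt_mem_nhds (by simpa using hε)))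

theorem eq_sum_pow_smul_add_pow_smul {R M : Type*} [Semiring R] [AddCommMonoid M] [Module R M]
    (a : R) {x w : ℕ → M} (h : ∀ t, x t = w t + a • x (t + 1)) (T : ℕ) :
    x 0 = ∑ t ∈ Finset.range T, a ^ t • w t + a ^ T • x T := by
  induction T with
  | zero => simp
  | succ T ih => rw [ih, h T, smul_add, Finset.sum_range_succ, pow_succ, mul_smul, add_assoc]

namespace IsModuleNorm

variable {A : Type*} [Ring A] {v : A → ℝ} {M : Type*} [AddCommGroup M] [Module A M]
  {nm : M → ℝ}

theorem map_zero (hnm : IsModuleNorm v nm) : nm 0 = 0 := (hnm.eq_zero_iff 0).mpr rfl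

theorem pos_of_ne_zero (hnm : IsModuleNorm v nm) {x : M} (hx : x ≠ 0) : 0 < nm x :=
  (hnm.nonneg x).lt_of_ne (fun h => hx ((hnm.eq_zero_iff x).mp h.symm))

theorem map_sub_rev (hnm : IsModuleNorm v nm) (x y : M) : nm (x - y) = nm (y - x) := by
  rw [← hnm.map_neg, neg_sub]

theorem sub_le_max (hnm : IsModuleNorm v nm) (x y : M) : nm (x - y) ≤ max (nm x) (nm y) := by
  simpa [sub_eq_add_neg, hnm.map_neg] using hnm.add_le x (-y)

theorem le_max_sub (hnm : IsModuleNorm v nm) (x y : M) : nm x ≤ max (nm (x - y)) (nm y) := by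
  simpa using hnm.add_le (x - y) y

theorem sum_le (hnm : IsModuleNorm v nm) {ι : Type*} (s : Finset ι) (f : ι → M) {B : ℝ}
    (hB : 0 ≤ B) (h : ∀ k ∈ s, nm (f k) ≤ B) : nm (∑ k ∈ s, f k) ≤ B := by
  induction s using Finset.cons_induction with
  | empty => simpa [hnm.map_zero] using hB
  | cons a s ha ih =>
    rw [Finset.sum_cons]
    exact (hnm.add_le _ _).trans (max_le (h a (Finset.mem_cons_self a s))
      (ih fun k hk => h k (Finset.mem_cons_of_mem hk)))

theorem eq_zero_of_forall_le (hnm : IsModuleNorm v nm) {x : M} (h : ∀ η : ℝ, 0 < η → nm x ≤ η) :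
    x = 0 :=
  (hnm.eq_zero_iff x).mp (le_antisymm (le_of_forall_pos_le_add fun η hη => by simpa using h η hη)
    (hnm.nonneg x))

def toAddGroupNorm (hnm : IsModuleNorm v nm) : AddGroupNorm M where
  toFun := nm
  map_zero' := hnm.map_zero
  add_le' x y := (hnm.add_le x y).trans (max_le_add_of_nonneg (hnm.nonneg x) (hnm.nonneg y))
  neg' := hnm.map_neg
  eq_zero_of_map_eq_zero' x := (hnm.eq_zero_iff x).mp

@[simp]
theorem coe_toAddGroupNorm (hnm : IsModuleNorm v nm) : ⇑hnm.toAddGroupNorm = nm :=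
  rfl

theorem le_of_normLim (hnm : IsModuleNorm v nm) {s : ℕ → M} {L : M}
    (hs : NormLim nm s L) {R : ℝ} (hR : ∀ T, nm (s T) ≤ R) : nm L ≤ R := by
  refine le_of_forall_pos_le_add fun η hη => ?_
  obtain ⟨T, hT⟩ := hs η hη
  calc nm L ≤ max (nm (L - s T)) (nm (s T)) := hnm.le_max_sub _ _
    _ ≤ max η R := max_le_max (by rw [hnm.map_sub_rev]; exact (hT T le_rfl).le) (hR T)
    _ ≤ R + η := max_le (by linarith [(hnm.nonneg _).trans (hR 0)]) (by linarith)

theorem exists_normLim_sum_of_le_geometric (hnm : IsModuleNorm v nm) (hcomp : NormComplete nm)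
    {f : ℕ → M} {r R : ℝ} (hr0 : 0 ≤ r) (hr1 : r < 1) (hR : 0 ≤ R)
    (hf : ∀ t, nm (f t) ≤ r ^ t * R) :
    ∃ L, NormLim nm (fun T => ∑ t ∈ Finset.range T, f t) L ∧ nm L ≤ R := by
  have htail : ∀ j i, j ≤ i →
      nm (∑ t ∈ Finset.range i, f t - ∑ t ∈ Finset.range j, f t) ≤ r ^ j * R := by
    intro j i hji
    rw [← Finset.sum_Ico_eq_sub _ hji]
    exact hnm.sum_le _ _ (by positivity) fun t ht => (hf t).trans
      (mul_le_mul_of_nonneg_right (pow_le_pow_of_le_one hr0 hr1.le (Finset.mem_Ico.mp ht).1) hR)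
  have hcauchy : NormCauchy nm fun T => ∑ t ∈ Finset.range T, f t := by
    intro ε hε
    obtain ⟨N, hN⟩ := exists_forall_ge_pow_mul_lt hr0 hr1 R hε
    refine ⟨N, fun i j hi hj => ?_⟩
    rcases le_total j i with hji | hij
    · exact (htail j i hji).trans_lt (hN j hj)
    · rw [hnm.map_sub_rev]
      exact (htail i j hij).trans_lt (hN i hi)
  obtain ⟨L, hL⟩ := hcomp _ hcauchy
  refine ⟨L, hL, hnm.le_of_normLim hL fun T => ?_⟩
  simpa [hnm.map_zero] using htail 0 T (Nat.zero_le T)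

theorem eq_sum_smul_of_normLim (hnm : IsModuleNorm v nm) {ι : Type*} [Fintype ι] {q : ι → M}
    {s : ℕ → ι → A} {c : ι → A}
    (hs : ∀ k, NormLim v (fun T => s T k) (c k)) {r : ℕ → M} (hr : NormLim nm r 0) {y : M}
    (hy : ∀ T, y = ∑ k, s T k • q k + r T) : y = ∑ k, c k • q k := by
  rw [← sub_eq_zero]
  refine hnm.eq_zero_of_forall_le fun η hη => ?_
  have hq : ∀ k, 0 < η / (nm (q k) + 1) := fun k => div_pos hη (by linarith [hnm.nonneg (q k)])
  obtain ⟨T, hsT, hrT⟩ := ((Filter.eventually_all.mpr fun k =>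
    Filter.eventually_atTop.mpr (hs k _ (hq k))).and
    (Filter.eventually_atTop.mpr (hr η hη))).exists
  have hdecomp : y - ∑ k, c k • q k = ∑ k, (s T k - c k) • q k + r T := by
    rw [hy T]; simp only [sub_smul, Finset.sum_sub_distrib]; abel
  rw [hdecomp]
  refine (hnm.add_le _ _).trans
    (max_le (hnm.sum_le _ _ hη.le fun k _ => ?_) (by simpa using hrT.le))
  calc nm ((s T k - c k) • q k) ≤ v (s T k - c k) * nm (q k) := hnm.smul_le _ _
    _ ≤ η / (nm (q k) + 1) * (nm (q k) + 1) :=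
        mul_le_mul (hsT k).le (by linarith) (hnm.nonneg _) (hq k).le
    _ = η := div_mul_cancel₀ _ (by linarith [hnm.nonneg (q k)])

end IsModuleNorm

theorem IsRingNorm.isModuleNorm {A : Type*} [Ring A] {v : A → ℝ} (hv : IsRingNorm v) :
    IsModuleNorm v v :=
  ⟨hv.nonneg, hv.eq_zero_iff, hv.map_neg, hv.add_le, hv.mul_le⟩

theorem AddGroupNorm.exists_ball_subset_closure {M : Type*} [AddCommGroup M] (f : AddGroupNorm M)
    (hcomp : NormComplete f) (F : ℕ → Set M) (hF : ∀ x, ∃ n, x ∈ F n) :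
    ∃ n x₀, ∃ δ > 0, ∀ x, f (x - x₀) < δ → ∀ η > 0, ∃ w ∈ F n, f (x - w) < η := by
  let := f.toNormedAddCommGroup
  have hdist : ∀ x y : M, dist x y = f (x - y) := fun _ _ => dist_eq_norm _ _
  have : CompleteSpace M := Metric.complete_of_cauchySeq_tendsto fun s hs => by
    obtain ⟨x, hx⟩ := hcomp s fun ε hε => by
      obtain ⟨N, hN⟩ := Metric.cauchySeq_iff.mp hs ε hε
      exact ⟨N, fun i j hi hj => by simpa only [hdist] using hN i hi j hj⟩
    exact ⟨x, Metric.tendsto_atTop.mpr (by simp only [hdist]; exact hx)⟩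
  obtain ⟨n, x₀, hx₀⟩ := nonempty_interior_of_iUnion_of_closed (f := fun n => closure (F n))
    (fun n => isClosed_closure)
    (Set.eq_univ_of_forall fun x => Set.mem_iUnion.mpr ⟨_, subset_closure (hF x).choose_spec⟩)
  obtain ⟨δ, hδ, hball⟩ := Metric.isOpen_iff.mp isOpen_interior x₀ hx₀
  refine ⟨n, x₀, δ, hδ, fun x hx η hη => ?_⟩
  have hx : x ∈ closure (F n) := interior_subset (hball (by rwa [Metric.mem_ball, hdist]))
  simpa only [hdist] using Metric.mem_closure_iff.mp hx η hη

structure IsMulPseudoUniformizer {A : Type*} [Ring A] (v : A → ℝ) (u : Aˣ) : Prop where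
  lt_one : v u < 1
  map_mul : ∀ b, v (u * b) = v u * v b

theorem IsBanachTate.exists_isMulPseudoUniformizer {A : Type*} [Ring A] {v : A → ℝ}
    (hA : IsBanachTate v) : ∃ u : Aˣ, IsMulPseudoUniformizer v u := by
  obtain ⟨ϖ, ⟨u, rfl⟩, h1, hmul⟩ := hA.exists_unit
  exact ⟨u, h1, hmul⟩

section PseudoUniformizer

variable {A : Type*} [Ring A] {v : A → ℝ}

theorem IsRingNorm.map_unit_pos (hv : IsRingNorm v) (u : Aˣ) : 0 < v u := by
  have : Nontrivial A := ⟨⟨1, 0, fun h => by simpa [h, hv.map_zero] using hv.map_one⟩⟩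
  exact (hv.nonneg _).lt_of_ne fun h => u.ne_zero ((hv.eq_zero_iff _).mp h.symm)

theorem IsRingNorm.map_zpow_unit (hv : IsRingNorm v) {u : Aˣ}
    (hu : ∀ b, v (u * b) = v u * v b) (k : ℤ) : v ↑(u ^ k) = v u ^ k := by
  have hu0 := (hv.map_unit_pos u).ne'
  suffices ∀ b, v (↑(u ^ k) * b) = v u ^ k * v b by simpa [hv.map_one] using this 1
  induction k using Int.induction_on with
  | zero => simp
  | succ n ih =>
    intro b
    rw [zpow_add_one, Units.val_mul, mul_assoc, ih, hu, zpow_add_one₀ hu0, mul_assoc]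
  | pred n ih =>
    intro b
    have hinv : v (↑u⁻¹ * b) = (v u)⁻¹ * v b := by
      rw [eq_inv_mul_iff_mul_eq₀ hu0, ← hu, Units.mul_inv_cancel_left]
    rw [zpow_sub_one, Units.val_mul, mul_assoc, ih, hinv, zpow_sub_one₀ hu0, mul_assoc]

theorem IsRingNorm.map_unit_pow (hv : IsRingNorm v) {u : Aˣ}
    (hu : ∀ b, v (u * b) = v u * v b) (n : ℕ) : v ((u : A) ^ n) = v u ^ n := by
  rw [← Units.val_pow_eq_pow_val, ← zpow_natCast, hv.map_zpow_unit hu, zpow_natCast]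

theorem IsModuleNorm.exists_unit_smul_lt (hv : IsRingNorm v) {u : Aˣ}
    (hu : IsMulPseudoUniformizer v u) {M : Type*} [AddCommGroup M]
    [Module A M] {nm : M → ℝ} (hnm : IsModuleNorm v nm) {x : M} (hx : x ≠ 0) {δ : ℝ}
    (hδ : 0 < δ) : ∃ w : Aˣ, nm (w • x) < δ ∧ v ↑w⁻¹ * (δ * v u) ≤ nm x := by
  have hu0 := hv.map_unit_pos u
  obtain ⟨n, hn1, hn2⟩ := exists_mem_Ico_zpow (div_pos (hnm.pos_of_ne_zero hx) hδ)
    ((one_lt_inv₀ hu0).mpr hu.lt_one)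
  refine ⟨u ^ (n + 1), ?_, ?_⟩
  · rw [div_lt_iff₀ hδ, inv_zpow'] at hn2
    calc nm (u ^ (n + 1) • x) ≤ v ↑(u ^ (n + 1)) * nm x := hnm.smul_le _ x
      _ = v u ^ (n + 1) * nm x := by rw [hv.map_zpow_unit hu.map_mul]
      _ < v u ^ (n + 1) * (v u ^ (-(n + 1)) * δ) := by gcongr
      _ = δ := by rw [zpow_neg]; field_simp
  · rw [le_div_iff₀ hδ, inv_zpow'] at hn1
    rw [← zpow_neg, hv.map_zpow_unit hu.map_mul]
    calc v u ^ (-(n + 1)) * (δ * v u) = v u ^ (-n) * δ := by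
          rw [neg_add, zpow_add₀ hu0.ne', zpow_neg_one]; field_simp
      _ ≤ nm x := hn1

end PseudoUniformizer

section Continuity

variable {M N : Type*} [AddCommGroup M] [AddCommGroup N] {nmM : M → ℝ} {nmN : N → ℝ}

theorem normContinuous_of_le_mul {F : Type*} [FunLike F M N] [AddMonoidHomClass F M N] {f : F}
    {C : ℝ} (hC : 0 < C) (hf : ∀ x, nmN (f x) ≤ C * nmM x) : NormContinuous nmM nmN f := by
  intro m ε hε
  refine ⟨ε / C, div_pos hε hC, fun m' hm' => ?_⟩
  calc nmN (f m' - f m) = nmN (f (m' - m)) := by rw [map_sub]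
    _ ≤ C * nmM (m' - m) := hf _
    _ < C * (ε / C) := by gcongr
    _ = ε := by field_simp

theorem NormContinuous.exists_le_mul {A : Type*} [Ring A] {v : A → ℝ} (hv : IsRingNorm v)
    {u : Aˣ} (hu : IsMulPseudoUniformizer v u) [Module A M] [Module A N]
    (hnmM : IsModuleNorm v nmM) (hnmN : IsModuleNorm v nmN) {f : M →ₗ[A] N}
    (hf : NormContinuous nmM nmN f) : ∃ C, 0 < C ∧ ∀ x, nmN (f x) ≤ C * nmM x := by
  obtain ⟨δ, hδ, hball⟩ := hf 0 1 one_pos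
  simp only [sub_zero, map_zero] at hball
  have hu0 := hv.map_unit_pos u
  refine ⟨(δ * v u)⁻¹, by positivity, fun x => ?_⟩
  rcases eq_or_ne x 0 with rfl | hx
  · simp [hnmN.map_zero, hnmM.map_zero]
  obtain ⟨w, hwx, hw⟩ := hnmM.exists_unit_smul_lt hv hu hx hδ
  rw [Units.smul_def] at hwx
  calc nmN (f x) = nmN ((↑w⁻¹ : A) • f ((w : A) • x)) := by
        rw [map_smul, smul_smul, Units.inv_mul, one_smul]
    _ ≤ v ↑w⁻¹ * nmN (f ((w : A) • x)) := hnmN.smul_le _ _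
    _ ≤ v ↑w⁻¹ * 1 := by gcongr; exacts [hv.nonneg _, (hball _ hwx).le]
    _ ≤ (δ * v u)⁻¹ * nmM x := by
        rw [mul_one, inv_mul_eq_div, le_div_iff₀ (by positivity)]
        exact hw

end Continuity

def HasBoundedCoeffs {A : Type*} [Ring A] (v : A → ℝ) {N : Type*} [AddCommGroup N] [Module A N]
    {ι : Type*} [Fintype ι] (q : ι → N) (R : ℝ) (y : N) : Prop :=
  ∃ c : ι → A, y = ∑ k, c k • q k ∧ ∀ k, v (c k) ≤ R

namespace HasBoundedCoeffs

variable {A : Type*} [Ring A] {v : A → ℝ} {N : Type*} [AddCommGroup N] [Module A N]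
  {ι : Type*} [Fintype ι] {q : ι → N} {R : ℝ} {y y' : N}

theorem mono (h : HasBoundedCoeffs v q R y) {R' : ℝ} (hR : R ≤ R') :
    HasBoundedCoeffs v q R' y :=
  let ⟨c, hy, hc⟩ := h
  ⟨c, hy, fun k => (hc k).trans hR⟩

theorem zero (hv : IsRingNorm v) (hR : 0 ≤ R) : HasBoundedCoeffs v q R 0 :=
  ⟨0, by simp, fun k => by simpa [hv.map_zero] using hR⟩

theorem sub (hv : IsRingNorm v) (h : HasBoundedCoeffs v q R y) (h' : HasBoundedCoeffs v q R y') :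
    HasBoundedCoeffs v q R (y - y') := by
  obtain ⟨c, rfl, hc⟩ := h
  obtain ⟨c', rfl, hc'⟩ := h'
  refine ⟨c - c', by simp [sub_smul], fun k => ?_⟩
  exact (hv.isModuleNorm.sub_le_max _ _).trans (max_le (hc k) (hc' k))

theorem smul (hv : IsRingNorm v) (h : HasBoundedCoeffs v q R y) (a : A) :
    HasBoundedCoeffs v q (v a * R) (a • y) := by
  obtain ⟨c, rfl, hc⟩ := h
  refine ⟨fun k => a * c k, by simp [Finset.smul_sum, mul_smul], fun k => ?_⟩
  exact (hv.mul_le _ _).trans (mul_le_mul_of_nonneg_left (hc k) (hv.nonneg a))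

theorem map (h : HasBoundedCoeffs v q R y) {N' : Type*} [AddCommGroup N'] [Module A N']
    (f : N →ₗ[A] N') : HasBoundedCoeffs v (f ∘ q) R (f y) := by
  obtain ⟨c, rfl, hc⟩ := h
  exact ⟨c, by simp, hc⟩

theorem exists_of_mem_span (hv : IsRingNorm v) (hy : y ∈ Submodule.span A (Set.range q)) :
    ∃ n : ℕ, HasBoundedCoeffs v q n y := by
  obtain ⟨c, rfl⟩ := (Submodule.mem_span_range_iff_exists_fun A).mp hy
  obtain ⟨n, hn⟩ := exists_nat_ge (∑ k, v (c k))
  exact ⟨n, c, rfl, fun k =>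
    (Finset.single_le_sum (fun k _ => hv.nonneg (c k)) (Finset.mem_univ k)).trans hn⟩

end HasBoundedCoeffs

section BoundedGeneration

variable {A : Type*} [Ring A] {v : A → ℝ} {M N : Type*} [AddCommGroup M] [Module A M]
  [AddCommGroup N] [Module A N] {nmM : M → ℝ} {nmN : N → ℝ} {ι : Type*} [Fintype ι]

theorem exists_approx_hasBoundedCoeffs (hv : IsRingNorm v) (hnmM : IsModuleNorm v nmM)
    (hcomp : NormComplete nmM) (g : M →ₗ[A] N) (q : ι → N)
    (hg : ∀ x, g x ∈ Submodule.span A (Set.range q)) :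
    ∃ R δ, 0 < R ∧ 0 < δ ∧ ∀ x, nmM x < δ → ∀ η > 0,
      ∃ w, nmM (x - w) < η ∧ HasBoundedCoeffs v q R (g w) := by
  obtain ⟨n, x₀, δ, hδ, hball⟩ := hnmM.toAddGroupNorm.exists_ball_subset_closure hcomp
    (fun n => {x | HasBoundedCoeffs v q n (g x)})
    (fun x => HasBoundedCoeffs.exists_of_mem_span hv (hg x))
  refine ⟨n + 1, δ, by positivity, hδ, fun x hx η hη => ?_⟩
  obtain ⟨w₀, hw₀, h₀⟩ := hball x₀ (by simpa [hnmM.map_zero] using hδ) η hη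
  obtain ⟨w₁, hw₁, h₁⟩ := hball (x₀ + x) (by simpa using hx) η hη
  refine ⟨w₁ - w₀, ?_, ?_⟩
  · calc nmM (x - (w₁ - w₀)) = nmM ((x₀ + x - w₁) - (x₀ - w₀)) := by congr 1; abel
      _ < η := (hnmM.sub_le_max _ _).trans_lt (max_lt h₁ h₀)
  · rw [map_sub]
    exact (HasBoundedCoeffs.sub hv hw₁ hw₀).mono (by linarith)

theorem exists_eq_add_smul_of_approx (hv : IsRingNorm v) {u : Aˣ}
    (hu : IsMulPseudoUniformizer v u) (hnmM : IsModuleNorm v nmM) {P : M → Prop} {δ : ℝ}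
    (happrox : ∀ x, nmM x < δ → ∀ η > 0, ∃ w, nmM (x - w) < η ∧ P w) {x : M}
    (hx : nmM x < δ) : ∃ w x', P w ∧ nmM x' < δ ∧ x = w + (u : A) • x' := by
  have hu0 := hv.map_unit_pos u
  obtain ⟨w, hw, hPw⟩ := happrox x hx (δ * v u) (by nlinarith [(hnmM.nonneg x).trans_lt hx])
  refine ⟨w, (↑u⁻¹ : A) • (x - w), hPw, ?_, by rw [smul_smul, Units.mul_inv, one_smul]; abel⟩
  calc nmM ((↑u⁻¹ : A) • (x - w)) ≤ v ↑u⁻¹ * nmM (x - w) := hnmM.smul_le _ _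
    _ = (v u)⁻¹ * nmM (x - w) := by
        rw [← zpow_neg_one, hv.map_zpow_unit hu.map_mul, zpow_neg_one]
    _ < (v u)⁻¹ * (δ * v u) := by gcongr
    _ = δ := by field_simp

theorem hasBoundedCoeffs_of_approx (hv : IsRingNorm v) (hAc : NormComplete v) {u : Aˣ}
    (hu : IsMulPseudoUniformizer v u) (hnmM : IsModuleNorm v nmM) (hnmN : IsModuleNorm v nmN)
    {g : M →ₗ[A] N} (hg : NormContinuous nmM nmN g) {q : ι → N} {R δ : ℝ} (hR : 0 ≤ R)
    (happrox : ∀ x, nmM x < δ → ∀ η > 0, ∃ w, nmM (x - w) < η ∧ HasBoundedCoeffs v q R (g w))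
    {x : M} (hx : nmM x < δ) : HasBoundedCoeffs v q R (g x) := by
  choose! W X' hW hX' hWX using fun x => exists_eq_add_smul_of_approx hv hu hnmM happrox (x := x)
  choose! c hc hcR using hW
  set xs : ℕ → M := fun t => X'^[t] x with hxs_def
  have hxs : ∀ t, nmM (xs t) < δ := by
    intro t
    induction t with
    | zero => exact hx
    | succ t ih => simpa only [hxs_def, Function.iterate_succ_apply'] using hX' _ ih
  set s : ℕ → ι → A := fun T k => ∑ t ∈ Finset.range T, (u : A) ^ t * c (xs t) k
  have hgx : ∀ T, g x = ∑ k, s T k • q k + (u : A) ^ T • g (xs T) := by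
    intro T
    have htel := eq_sum_pow_smul_add_pow_smul (u : A) (x := xs) (w := fun t => W (xs t))
      (fun t => by simpa only [hxs_def, Function.iterate_succ_apply'] using hWX _ (hxs t)) T
    rw [show x = xs 0 from rfl, htel, map_add, map_sum]
    simp only [map_smul, hc _ (hxs _), Finset.smul_sum, smul_smul, s, Finset.sum_smul]
    rw [Finset.sum_comm]
  have hlim : ∀ k, ∃ L, NormLim v (fun T => s T k) L ∧ v L ≤ R := fun k =>
    hv.isModuleNorm.exists_normLim_sum_of_le_geometric hAc (hv.nonneg _) hu.lt_one hR fun t =>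
      calc v ((u : A) ^ t * c (xs t) k) ≤ v ((u : A) ^ t) * v (c (xs t) k) := hv.mul_le _ _
        _ ≤ v u ^ t * R := by
            rw [hv.map_unit_pow hu.map_mul]
            exact mul_le_mul_of_nonneg_left (hcR _ (hxs t) k) (pow_nonneg (hv.nonneg _) t)
  choose L hL hLR using hlim
  obtain ⟨Cg, hCg, hgb⟩ := hg.exists_le_mul hv hu hnmM hnmN
  have hrest : NormLim nmN (fun T => (u : A) ^ T • g (xs T)) 0 := by
    intro ε hε
    obtain ⟨N, hN⟩ := exists_forall_ge_pow_mul_lt (hv.nonneg _) hu.lt_one (Cg * δ) hε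
    refine ⟨N, fun T hT => lt_of_le_of_lt ?_ (hN T hT)⟩
    calc nmN ((u : A) ^ T • g (xs T) - 0) ≤ v ((u : A) ^ T) * nmN (g (xs T)) := by
          simpa using hnmN.smul_le _ _
      _ ≤ v u ^ T * (Cg * δ) := by
          rw [hv.map_unit_pow hu.map_mul]
          exact mul_le_mul_of_nonneg_left ((hgb _).trans (by gcongr; exact (hxs T).le))
            (pow_nonneg (hv.nonneg _) T)
  exact ⟨L, hnmN.eq_sum_smul_of_normLim hL hrest hgx, hLR⟩

theorem exists_hasBoundedCoeffs_mul (hv : IsRingNorm v) (hAc : NormComplete v) {u : Aˣ}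
    (hu : IsMulPseudoUniformizer v u) (hnmM : IsModuleNorm v nmM) (hcompM : NormComplete nmM)
    (hnmN : IsModuleNorm v nmN) {g : M →ₗ[A] N} (hg : NormContinuous nmM nmN g) {q : ι → N}
    (hq : ∀ x, g x ∈ Submodule.span A (Set.range q)) :
    ∃ C, 0 < C ∧ ∀ x, HasBoundedCoeffs v q (C * nmM x) (g x) := by
  obtain ⟨R, δ, hR, hδ, happrox⟩ := exists_approx_hasBoundedCoeffs hv hnmM hcompM g q hq
  have hu0 := hv.map_unit_pos u
  refine ⟨R / (δ * v u), by positivity, fun x => ?_⟩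
  rcases eq_or_ne x 0 with rfl | hx
  · simpa [hnmM.map_zero] using HasBoundedCoeffs.zero (q := q) hv le_rfl
  obtain ⟨w, hwx, hw⟩ := hnmM.exists_unit_smul_lt hv hu hx hδ
  rw [Units.smul_def] at hwx
  have hgx : g x = (↑w⁻¹ : A) • g ((w : A) • x) := by
    rw [map_smul, smul_smul, Units.inv_mul, one_smul]
  rw [hgx]
  refine ((hasBoundedCoeffs_of_approx hv hAc hu hnmM hnmN hg hR.le happrox hwx).smul hv _).mono ?_
  rw [div_mul_eq_mul_div, le_div_iff₀ (by positivity), mul_comm R, mul_assoc, mul_comm R,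
    ← mul_assoc]
  exact mul_le_mul_of_nonneg_right hw hR.le

theorem FiniteRank.exists_hasBoundedCoeffs (hv : IsRingNorm v) (hAc : NormComplete v) {u : Aˣ}
    (hu : IsMulPseudoUniformizer v u) (hnmM : IsModuleNorm v nmM) (hcompM : NormComplete nmM)
    (hnmN : IsModuleNorm v nmN) {g : M →ₗ[A] N} (hg : NormContinuous nmM nmN g)
    (hgfr : FiniteRank g) :
    ∃ (n : ℕ) (q : Fin n → N) (C : ℝ), 0 < C ∧ ∀ x, HasBoundedCoeffs v q (C * nmM x) (g x) := by
  obtain ⟨P, hP, hrange⟩ := hgfr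
  obtain ⟨n, q, rfl⟩ := Submodule.fg_iff_exists_fin_generating_family.mp hP
  exact ⟨n, q, exists_hasBoundedCoeffs_mul hv hAc hu hnmM hcompM hnmN hg
    fun x => hrange (LinearMap.mem_range_self g x)⟩

end BoundedGeneration

section ONBasis

variable {A : Type*} [Ring A] {v : A → ℝ} {hv : IsRingNorm v} {I : Type*}

theorem cA_bddAbove (f : cA v hv I) : BddAbove (Set.range fun i => v ((f : I → A) i)) := by
  refine ((((f.2 1 one_pos).image fun i => v ((f : I → A) i)).bddAbove).union
    (bddAbove_Iic (a := 1))).mono ?_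
  rintro _ ⟨i, rfl⟩
  by_cases h : 1 < v ((f : I → A) i)
  · exact Or.inl ⟨i, h, rfl⟩
  · exact Or.inr (not_lt.mp h)

theorem le_cNorm (f : cA v hv I) (i : I) : v ((f : I → A) i) ≤ cNorm v f :=
  le_ciSup (cA_bddAbove f) i

theorem cNorm_le (f : cA v hv I) {B : ℝ} (hB : 0 ≤ B) (h : ∀ i, v ((f : I → A) i) ≤ B) :
    cNorm v f ≤ B :=
  Real.iSup_le h hB

theorem cNorm_nonneg (f : cA v hv I) : 0 ≤ cNorm v f :=
  Real.iSup_nonneg fun _ => hv.nonneg _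

@[simp]
theorem stdDelta_apply [DecidableEq I] (i j : I) :
    (stdDelta v hv i : I → A) j = if j = i then 1 else 0 := by
  simp only [stdDelta]; congr

theorem cNorm_stdDelta_le_one (i : I) : cNorm v (stdDelta v hv i) ≤ 1 :=
  cNorm_le _ zero_le_one fun j => by
    by_cases h : j = i <;> simp [h, hv.map_one, hv.map_zero]

@[simp]
theorem projCA_apply (S : Finset I) (f : cA v hv I) (i : I) :
    (projCA v hv S f : I → A) i = if i ∈ S then (f : I → A) i else 0 := by
  simp only [projCA]; congr

theorem projCA_eq_sum (S : Finset I) (f : cA v hv I) :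
    projCA v hv S f = ∑ i ∈ S, (f : I → A) i • stdDelta v hv i := by
  ext j
  simp [Finset.sum_apply]

theorem cNorm_projCA_le (S : Finset I) (f : cA v hv I) : cNorm v (projCA v hv S f) ≤ cNorm v f :=
  cNorm_le _ (cNorm_nonneg f) fun i => by
    rw [projCA_apply]
    split_ifs
    exacts [le_cNorm f i, hv.map_zero ▸ cNorm_nonneg f]

theorem exists_cNorm_sub_projCA_le (f : cA v hv I) {η : ℝ} (hη : 0 < η) :
    ∃ S, cNorm v (f - projCA v hv S f) ≤ η :=
  ⟨(f.2 η hη).toFinset, cNorm_le _ hη.le fun i => by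
    simp only [Submodule.coe_sub, Pi.sub_apply, projCA_apply, Set.Finite.mem_toFinset]
    split_ifs with h
    · simpa [hv.map_zero] using hη.le
    · simpa using h⟩

theorem finite_setOf_exists_lt_of_hasBoundedCoeffs {ι : Type*} [Fintype ι] (q : ι → cA v hv I)
    {C : ℝ} (hC : 0 < C) {K : Type*} {y : K → cA v hv I}
    (hy : ∀ k, HasBoundedCoeffs v q C (y k)) {ε : ℝ} (hε : 0 < ε) :
    {i | ∃ k, ε < v ((y k : I → A) i)}.Finite := by
  refine (Set.finite_iUnion fun l => (q l).2 (ε / C) (div_pos hε hC)).subset ?_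
  rintro i ⟨k, hk⟩
  by_contra hi
  simp only [Set.mem_iUnion, Set.mem_ofPred_eq, not_exists, not_lt] at hi
  obtain ⟨c, hyk, hc⟩ := hy k
  refine hk.not_ge ?_
  rw [hyk, Submodule.coe_sum, Finset.sum_apply]
  refine hv.isModuleNorm.sum_le _ _ hε.le fun l _ => ?_
  calc v (((c l • q l : cA v hv I) : I → A) i) = v (c l * (q l : I → A) i) := rfl
    _ ≤ v (c l) * v ((q l : I → A) i) := hv.mul_le _ _
    _ ≤ C * (ε / C) := mul_le_mul (hc l) (hi l) (hv.nonneg _) hC.le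
    _ = ε := by field_simp

end ONBasis

section IsometricBasis

variable {A : Type*} [Ring A] {v : A → ℝ} {hv : IsRingNorm v} {I : Type*} {M N : Type*}
  [AddCommGroup M] [Module A M] [AddCommGroup N] [Module A N] {nmM : M → ℝ} {nmN : N → ℝ}
  {T : M ≃ₗ[A] cA v hv I}

theorem coord_le_of_isometry (hT : ∀ m, nmM m = cNorm v (T m)) (m : M) (i : I) :
    v ((T m : I → A) i) ≤ nmM m :=
  (le_cNorm _ i).trans_eq (hT m).symm

theorem norm_basis_le_one_of_isometry (hT : ∀ m, nmM m = cNorm v (T m)) (i : I) :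
    nmM (T.symm (stdDelta v hv i)) ≤ 1 := by
  rw [hT, LinearEquiv.apply_symm_apply]
  exact cNorm_stdDelta_le_one i

theorem projON_le_of_isometry {I M : Type v} [AddCommGroup M] [Module A M] {nm : M → ℝ}
    {T : M ≃ₗ[A] cA v hv I} (hT : ∀ m, nm m = cNorm v (T m)) (S : Finset I) (m : M) :
    nm (projON v hv T S m) ≤ nm m := by
  simpa only [projON, LinearMap.comp_apply, LinearEquiv.coe_coe, hT,
    LinearEquiv.apply_symm_apply] using cNorm_projCA_le S (T m)

theorem finiteRank_projON_comp {I M : Type v} [AddCommGroup M] [Module A M]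
    (T : M ≃ₗ[A] cA v hv I) (S : Finset I) (f : N →ₗ[A] M) :
    FiniteRank (projON v hv T S ∘ₗ f) := by
  refine ⟨_, (Submodule.fg_span (S.finite_toSet.image (stdDelta v hv))).map
    T.symm.toLinearMap, ?_⟩
  rintro _ ⟨n, rfl⟩
  refine ⟨projCA v hv S (T (f n)), ?_, rfl⟩
  rw [projCA_eq_sum]
  exact Submodule.sum_mem _ fun i hi =>
    Submodule.smul_mem _ _ (Submodule.subset_span ⟨i, hi, rfl⟩)

theorem le_mul_of_forall_basis_le (hnmN : IsModuleNorm v nmN)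
    (hT : ∀ m, nmM m = cNorm v (T m)) {ψ : M →ₗ[A] N} {C : ℝ} (hC : 0 < C)
    (hψ : ∀ m, nmN (ψ m) ≤ C * nmM m) {B : ℝ} (hB : 0 ≤ B)
    (hψB : ∀ i, nmN (ψ (T.symm (stdDelta v hv i))) ≤ B) (m : M) : nmN (ψ m) ≤ B * nmM m := by
  refine le_of_forall_pos_le_add fun η hη => ?_
  obtain ⟨S, hS⟩ := exists_cNorm_sub_projCA_le (T m) (div_pos hη hC)
  set mS := T.symm (projCA v hv S (T m))
  have htail : nmN (ψ (m - mS)) ≤ η := by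
    calc nmN (ψ (m - mS)) ≤ C * nmM (m - mS) := hψ _
      _ ≤ C * (η / C) := by
          gcongr
          simpa only [hT, map_sub, mS, LinearEquiv.apply_symm_apply] using hS
      _ = η := by field_simp
  have hm : 0 ≤ nmM m := (hT m).symm ▸ cNorm_nonneg _
  have hhead : nmN (ψ mS) ≤ B * nmM m := by
    simp only [mS, projCA_eq_sum, map_sum, map_smul]
    refine hnmN.sum_le _ _ (by positivity) fun i _ => ?_
    calc nmN (((T m : I → A) i) • ψ (T.symm (stdDelta v hv i)))
        ≤ v ((T m : I → A) i) * nmN (ψ (T.symm (stdDelta v hv i))) := hnmN.smul_le _ _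
      _ ≤ nmM m * B := mul_le_mul (coord_le_of_isometry hT m i) (hψB i) (hnmN.nonneg _) hm
      _ = B * nmM m := mul_comm _ _
  calc nmN (ψ m) ≤ max (nmN (ψ (m - mS))) (nmN (ψ mS)) := by
        simpa using hnmN.le_max_sub (ψ m) (ψ mS)
    _ ≤ B * nmM m + η := max_le (by nlinarith [mul_nonneg hB hm]) (by linarith)

end IsometricBasis

section Matrix

variable {A : Type u} [Ring A] {v : A → ℝ} {M N : Type u} [AddCommGroup M] [Module A M]
  [AddCommGroup N] [Module A N] {nmM : M → ℝ} {nmN : N → ℝ} {I J : Type u}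

theorem finite_setOf_lt_iSup_matrixCoef_of_isCompactOp (hA : IsBanachTate v)
    (hnmM : IsModuleNorm v nmM) (hcompM : NormComplete nmM) (hnmN : IsModuleNorm v nmN)
    {TM : M ≃ₗ[A] cA v hA.isRingNorm I} (hTM : ∀ m, nmM m = cNorm v (TM m))
    {TN : N ≃ₗ[A] cA v hA.isRingNorm J} (hTN : ∀ x, nmN x = cNorm v (TN x))
    {φ : M →ₗ[A] N} (hφ : IsCompactOp nmM nmN φ) {ε : ℝ} (hε : 0 < ε) :
    {j | ε < ⨆ i, v (matrixCoef v hA.isRingNorm TM TN φ i j)}.Finite := by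
  obtain ⟨u, hu⟩ := hA.exists_isMulPseudoUniformizer
  obtain ⟨g, hgc, hgfr, hgε⟩ := hφ.2 ε hε
  obtain ⟨n, q, C, hC, hgq⟩ :=
    hgfr.exists_hasBoundedCoeffs hA.isRingNorm hA.complete hu hnmM hcompM hnmN hgc
  set e : I → M := fun i => TM.symm (stdDelta v hA.isRingNorm i)
  have he : ∀ i, nmM (e i) ≤ 1 := norm_basis_le_one_of_isometry hTM
  have hcol : ∀ i, HasBoundedCoeffs v (TN.toLinearMap ∘ q) C (TN (g (e i))) := fun i =>
    ((hgq (e i)).map TN.toLinearMap).mono (mul_le_of_le_one_right hC.le (he i))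
  refine (finite_setOf_exists_lt_of_hasBoundedCoeffs _ hC hcol hε).subset fun j hj => ?_
  by_contra hgj
  simp only [Set.mem_ofPred_eq, not_exists, not_lt] at hj hgj
  refine hj.not_ge (Real.iSup_le (fun i => ?_) hε.le)
  have hdiff : v (matrixCoef v hA.isRingNorm TM TN φ i j - (TN (g (e i)) : J → A) j) ≤ ε :=
    calc _ = v ((TN (φ (e i) - g (e i)) : J → A) j) := by rw [map_sub]; rfl
      _ ≤ nmN (φ (e i) - g (e i)) := coord_le_of_isometry hTN _ j
      _ ≤ ε * nmM (e i) := hgε _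
      _ ≤ ε := mul_le_of_le_one_right hε.le (he i)
  exact (hA.isRingNorm.isModuleNorm.le_max_sub _ _).trans (max_le hdiff (hgj i))

theorem isCompactOp_of_finite_setOf_lt_iSup_matrixCoef (hv : IsRingNorm v) {u : Aˣ}
    (hu : IsMulPseudoUniformizer v u) (hnmM : IsModuleNorm v nmM) (hnmN : IsModuleNorm v nmN)
    {TM : M ≃ₗ[A] cA v hv I} (hTM : ∀ m, nmM m = cNorm v (TM m))
    {TN : N ≃ₗ[A] cA v hv J} (hTN : ∀ x, nmN x = cNorm v (TN x))
    {φ : M →ₗ[A] N} (hφ : NormContinuous nmM nmN φ)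
    (hfin : ∀ ε : ℝ, 0 < ε → {j | ε < ⨆ i, v (matrixCoef v hv TM TN φ i j)}.Finite) :
    IsCompactOp nmM nmN φ := by
  obtain ⟨C, hC, hφC⟩ := hφ.exists_le_mul hv hu hnmM hnmN
  refine ⟨hφ, fun ε hε => ⟨projON v hv TN (hfin ε hε).toFinset ∘ₗ φ,
    normContinuous_of_le_mul hC fun m => (projON_le_of_isometry hTN _ _).trans (hφC m),
    finiteRank_projON_comp _ _ _, fun m => ?_⟩⟩
  have hm : 0 ≤ nmM m := (hTM m).symm ▸ cNorm_nonneg _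
  rw [hTN, map_sub]
  simp only [LinearMap.comp_apply, projON, LinearEquiv.coe_coe, LinearEquiv.apply_symm_apply]
  refine cNorm_le _ (by positivity) fun j => ?_
  simp only [Submodule.coe_sub, Pi.sub_apply, projCA_apply, Set.Finite.mem_toFinset]
  split_ifs with hj
  · simpa [hv.map_zero] using mul_nonneg hε.le hm
  rw [sub_zero]
  have hbdd : BddAbove (Set.range fun i => v (matrixCoef v hv TM TN φ i j)) :=
    ⟨C, Set.forall_mem_range.mpr fun i => (coord_le_of_isometry hTN _ j).trans
      ((hφC _).trans (mul_le_of_le_one_right hC.le (norm_basis_le_one_of_isometry hTM i)))⟩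
  exact le_mul_of_forall_basis_le (ψ := LinearMap.proj j ∘ₗ (cA v hv J).subtype ∘ₗ
      TN.toLinearMap ∘ₗ φ) hv.isModuleNorm hTM hC
    (fun m => (coord_le_of_isometry hTN _ j).trans (hφC m)) hε.le
    (fun i => (le_ciSup hbdd i).trans (not_lt.mp hj)) m

end Matrix

theorem isCompactOp_iff_matrix_sup_tendsto_zero_general
    {A : Type u} [Ring A] (v : A → ℝ) (hA : IsBanachTate v)
    {M N : Type u} [AddCommGroup M] [Module A M] [AddCommGroup N] [Module A N]
    (nmM : M → ℝ) (hnmM : IsModuleNorm v nmM) (hcompM : NormComplete nmM)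
    (nmN : N → ℝ) (hnmN : IsModuleNorm v nmN)
    {I J : Type u}
    (TM : M ≃ₗ[A] cA v hA.isRingNorm I) (hTM : ∀ m : M, nmM m = cNorm v (TM m))
    (TN : N ≃ₗ[A] cA v hA.isRingNorm J) (hTN : ∀ x : N, nmN x = cNorm v (TN x))
    (φ : M →ₗ[A] N) (hφ : NormContinuous nmM nmN φ) :
    IsCompactOp nmM nmN φ ↔
      ∀ ε : ℝ, 0 < ε →
        {j : J | ε < ⨆ i : I, v (matrixCoef v hA.isRingNorm TM TN φ i j)}.Finite := by
  obtain ⟨u, hu⟩ := hA.exists_isMulPseudoUniformizer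
  exact ⟨fun h ε hε => finite_setOf_lt_iSup_matrixCoef_of_isCompactOp hA hnmM hcompM hnmN
      hTM hTN h hε,
    isCompactOp_of_finite_setOf_lt_iSup_matrixCoef hA.isRingNorm hu hnmM hnmN hTM hTN hφ⟩

/-- A continuous linear map `φ : M → N` of ONable Banach modules over a
noetherian Banach–Tate ring, with matrix `(a_{i,j})`, is compact if and only if
`lim_{j→∞} sup_{i∈I} |a_{i,j}| = 0`, i.e. for every `ε > 0` only finitely many `j`
satisfy `sup_i |a_{i,j}| > ε`. -/
theorem isCompactOp_iff_matrix_sup_tendsto_zero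
    {A : Type u} [Ring A] (v : A → ℝ) (hA : IsBanachTate v)
    (hnoeth : IsNoetherianRing A)
    {M N : Type u} [AddCommGroup M] [Module A M] [AddCommGroup N] [Module A N]
    (nmM : M → ℝ) (hnmM : IsModuleNorm v nmM) (hcompM : NormComplete nmM)
    (nmN : N → ℝ) (hnmN : IsModuleNorm v nmN) (hcompN : NormComplete nmN)
    {I J : Type u}
    (TM : M ≃ₗ[A] cA v hA.isRingNorm I) (hTM : ∀ m : M, nmM m = cNorm v (TM m))
    (TN : N ≃ₗ[A] cA v hA.isRingNorm J) (hTN : ∀ x : N, nmN x = cNorm v (TN x))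
    (φ : M →ₗ[A] N) (hφ : NormContinuous nmM nmN φ) :
    IsCompactOp nmM nmN φ ↔
      ∀ ε : ℝ, 0 < ε →
        {j : J | ε < ⨆ i : I, v (matrixCoef v hA.isRingNorm TM TN φ i j)}.Finite :=
  isCompactOp_iff_matrix_sup_tendsto_zero_general v hA nmM hnmM hcompM nmN hnmN TM hTM TN hTN φ hφ
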